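/- For every integer m ≥ 1, N_m = Σ_{j=1}^{m−1} (2^j − 1)·N_{m−j} + (2^m − 1) + (2^{m+1} − 1), where the sum is empty when m = 1. -/

import Mathlib

/-- `Lessdot l₁ l₂ s` means `l₁ + l₂ ⋖ s`: for every bit position `i`,
the binary digits satisfy `(l₁)ᵢ + (l₂)ᵢ ≤ (s)ᵢ`. -/
def Lessdot (l₁ l₂ s : ℕ) : Prop :=
  ∀ i : ℕ, (l₁.testBit i).toNat + (l₂.testBit i).toNat ≤ (s.testBit i).toNat

open scoped Classical in
/-- `BSet r s = B_s^{(r)} = {2^r·l₁ + l₂ : l₁ + l₂ ⋖ s}`.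
(Note `l₁ + l₂ ⋖ s` forces `l₁, l₂ ≤ s`, so the ranges capture the whole set.) -/
noncomputable def BSet (r s : ℕ) : Finset ℕ :=
  ((Finset.range (s + 1) ×ˢ Finset.range (s + 1)).filter
    (fun p => Lessdot p.1 p.2 s)).image (fun p => 2 ^ r * p.1 + p.2)

/-- `Nnum r m = N_m^{(r)} = Σ_{s=0}^{2^m−1} |B_s^{(r)}|`. -/
noncomputable def Nnum (r m : ℕ) : ℕ := ∑ s ∈ Finset.range (2 ^ m), (BSet r s).card

/-!
Splitting off the last binary digit of `l₁`, `l₂` and `s` gives `B_{2s} = 2B_s` and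
`B_{2s+1} = 2C_s ∪ (2B_s + 1)` with `C_s = B_s ∪ (B_s + 1)`, while `C_{2s} = 2B_s ∪ (2B_s + 1)` and
`C_{2s+1} = 2C_s ∪ (2C_s + 1)`. Summing cardinalities over `s < 2^m`, with `M_m = Σ |C_s|`, gives
`N_{m+1} = 2N_m + M_m` and `M_{m+1} = 2N_m + 2M_m = M_m + N_{m+1}`, so `M_m = 1 + Σ_{i≤m} N_i` and
`N_{m+1} = 2N_m + 1 + Σ_{i≤m} N_i`. Since `2^{j+1} - 1 = 2(2^j - 1) + 1`, the right-hand side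
`Σ_{j=1}^{m} (2^j - 1) N_{m-j} + 2^{m+1} - 1` obeys the same recursion and agrees with `N_0 = 1`.
-/

open Finset

namespace Lessdot

lemma le_left {l₁ l₂ s : ℕ} (h : Lessdot l₁ l₂ s) : l₁ ≤ s :=
  Nat.le_of_testBit fun i hi => by have := h i; cases hs : s.testBit i <;> simp_all

lemma symm {l₁ l₂ s : ℕ} (h : Lessdot l₁ l₂ s) : Lessdot l₂ l₁ s :=
  fun i => (Nat.add_comm _ _).trans_le (h i)

lemma le_right {l₁ l₂ s : ℕ} (h : Lessdot l₁ l₂ s) : l₂ ≤ s :=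
  h.symm.le_left

end Lessdot

lemma lessdot_two_mul_add_iff {a b s e₁ e₂ t : ℕ} (he₁ : e₁ ≤ 1) (he₂ : e₂ ≤ 1) (ht : t ≤ 1) :
    Lessdot (2 * a + e₁) (2 * b + e₂) (2 * s + t) ↔ e₁ + e₂ ≤ t ∧ Lessdot a b s := by
  have hdiv : ∀ x e, e ≤ 1 → (2 * x + e) / 2 = x := by omega
  have hbit : ∀ x e, e ≤ 1 → ((2 * x + e).testBit 0).toNat = e := by
    intro x e he; rw [Nat.testBit_zero]; interval_cases e <;> simp [Nat.add_mod]
  unfold Lessdot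
  rw [← Nat.and_forall_add_one]
  simp only [Nat.testBit_add_one, hdiv _ _ he₁, hdiv _ _ he₂, hdiv _ _ ht, hbit _ _ he₁,
    hbit _ _ he₂, hbit _ _ ht]

lemma mem_BSet {r s n : ℕ} : n ∈ BSet r s ↔ ∃ l₁ l₂, Lessdot l₁ l₂ s ∧ 2 ^ r * l₁ + l₂ = n := by
  classical
  simp only [BSet, mem_image, mem_filter, mem_product, mem_range, Prod.exists]
  exact exists₂_congr fun l₁ l₂ => ⟨fun ⟨⟨_, h⟩, hn⟩ => ⟨h, hn⟩,
    fun ⟨h, hn⟩ => ⟨⟨⟨Nat.lt_succ_of_le h.le_left, Nat.lt_succ_of_le h.le_right⟩, h⟩, hn⟩⟩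

lemma mem_BSet_two_mul_add {s t n : ℕ} (ht : t ≤ 1) :
    n ∈ BSet 1 (2 * s + t) ↔
      ∃ m ∈ BSet 1 s, ∃ e₁ e₂, e₁ ≤ 1 ∧ e₂ ≤ 1 ∧ e₁ + e₂ ≤ t ∧ 2 * m + 2 * e₁ + e₂ = n := by
  simp only [mem_BSet]
  constructor
  · rintro ⟨l₁, l₂, h, rfl⟩
    have hl₁ := Nat.div_add_mod l₁ 2
    have hl₂ := Nat.div_add_mod l₂ 2
    rw [← hl₁, ← hl₂, lessdot_two_mul_add_iff (by omega) (by omega) ht] at h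
    exact ⟨_, ⟨l₁ / 2, l₂ / 2, h.2, rfl⟩, l₁ % 2, l₂ % 2, by omega, by omega, h.1, by omega⟩
  · rintro ⟨-, ⟨a, b, h, rfl⟩, e₁, e₂, he₁, he₂, he, rfl⟩
    exact ⟨2 * a + e₁, 2 * b + e₂, (lessdot_two_mul_add_iff he₁ he₂ ht).2 ⟨he, h⟩, by ring⟩

lemma BSet_zero : BSet 1 0 = {0} := by
  ext n
  simp only [mem_BSet, mem_singleton]
  constructor
  · rintro ⟨l₁, l₂, h, rfl⟩
    simp [Nat.le_zero.1 h.le_left, Nat.le_zero.1 h.le_right]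
  · rintro rfl
    exact ⟨0, 0, fun i => by simp, rfl⟩

noncomputable def CSet (s : ℕ) : Finset ℕ := BSet 1 s ∪ (BSet 1 s).image (· + 1)

noncomputable def Mnum (m : ℕ) : ℕ := ∑ s ∈ range (2 ^ m), (CSet s).card

lemma mem_CSet {s n : ℕ} : n ∈ CSet s ↔ ∃ m ∈ BSet 1 s, m = n ∨ m + 1 = n := by
  simp only [CSet, mem_union, mem_image]
  constructor
  · rintro (h | ⟨m, h, rfl⟩)
    exacts [⟨n, h, .inl rfl⟩, ⟨m, h, .inr rfl⟩]
  · rintro ⟨m, h, rfl | rfl⟩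
    exacts [Or.inl h, Or.inr ⟨m, h, rfl⟩]

lemma BSet_two_mul (s : ℕ) : BSet 1 (2 * s) = (BSet 1 s).image (2 * ·) := by
  ext n
  rw [← add_zero (2 * s), mem_BSet_two_mul_add zero_le_one, mem_image]
  constructor
  · rintro ⟨m, hm, e₁, e₂, -, -, he, rfl⟩
    exact ⟨m, hm, by omega⟩
  · rintro ⟨m, hm, rfl⟩
    exact ⟨m, hm, 0, 0, by omega⟩

lemma BSet_two_mul_add_one (s : ℕ) :
    BSet 1 (2 * s + 1) = (CSet s).image (2 * ·) ∪ (BSet 1 s).image (2 * · + 1) := by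
  ext n
  simp only [mem_BSet_two_mul_add le_rfl, mem_union, mem_image, mem_CSet]
  constructor
  · rintro ⟨m, hm, e₁, e₂, he₁, he₂, he, rfl⟩
    rcases Nat.le_one_iff_eq_zero_or_eq_one.1 he₂ with rfl | rfl
    · exact Or.inl ⟨m + e₁, ⟨m, hm, by omega⟩, by ring⟩
    · exact Or.inr ⟨m, hm, by omega⟩
  · rintro (⟨c, ⟨m, hm, rfl | rfl⟩, rfl⟩ | ⟨m, hm, rfl⟩)
    · exact ⟨m, hm, 0, 0, by omega⟩
    · exact ⟨m, hm, 1, 0, by omega⟩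
    · exact ⟨m, hm, 0, 1, by omega⟩

lemma CSet_two_mul (s : ℕ) :
    CSet (2 * s) = (BSet 1 s).image (2 * ·) ∪ (BSet 1 s).image (2 * · + 1) := by
  ext n
  simp only [mem_CSet, BSet_two_mul, mem_union, mem_image]
  constructor
  · rintro ⟨-, ⟨m, hm, rfl⟩, rfl | rfl⟩
    exacts [Or.inl ⟨m, hm, rfl⟩, Or.inr ⟨m, hm, rfl⟩]
  · rintro (⟨m, hm, rfl⟩ | ⟨m, hm, rfl⟩)
    exacts [⟨_, ⟨m, hm, rfl⟩, .inl rfl⟩, ⟨_, ⟨m, hm, rfl⟩, .inr rfl⟩]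

lemma CSet_two_mul_add_one (s : ℕ) :
    CSet (2 * s + 1) = (CSet s).image (2 * ·) ∪ (CSet s).image (2 * · + 1) := by
  ext n
  simp only [mem_CSet, mem_BSet_two_mul_add le_rfl, mem_union, mem_image]
  constructor
  · rintro ⟨-, ⟨m, hm, e₁, e₂, he₁, he₂, he, rfl⟩, hn⟩
    have hc : m = n / 2 ∨ m + 1 = n / 2 := by omega
    rcases Nat.mod_two_eq_zero_or_one n with hn2 | hn2
    · exact Or.inl ⟨n / 2, ⟨m, hm, hc⟩, by omega⟩
    · exact Or.inr ⟨n / 2, ⟨m, hm, hc⟩, by omega⟩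
  · rintro (⟨c, ⟨m, hm, rfl | rfl⟩, rfl⟩ | ⟨c, ⟨m, hm, rfl | rfl⟩, rfl⟩)
    · exact ⟨_, ⟨m, hm, 0, 0, by omega⟩, .inl rfl⟩
    · exact ⟨_, ⟨m, hm, 1, 0, by omega⟩, .inl rfl⟩
    · exact ⟨_, ⟨m, hm, 0, 1, by omega⟩, .inl rfl⟩
    · exact ⟨_, ⟨m, hm, 1, 0, by omega⟩, .inr rfl⟩

lemma card_image_two_mul (X : Finset ℕ) : (X.image (2 * ·)).card = X.card :=
  card_image_of_injective _ (mul_right_injective₀ two_ne_zero)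

lemma card_image_two_mul_union (X Y : Finset ℕ) :
    (X.image (2 * ·) ∪ Y.image (2 * · + 1)).card = X.card + Y.card := by
  rw [card_union_of_disjoint, card_image_two_mul,
    card_image_of_injective _ (fun a b h => by omega)]
  simp only [disjoint_left, mem_image]
  rintro _ ⟨x, -, rfl⟩ ⟨y, -, h⟩
  omega

lemma sum_range_two_mul {M : Type*} [AddCommMonoid M] (f : ℕ → M) (n : ℕ) :
    ∑ i ∈ range (2 * n), f i = ∑ i ∈ range n, (f (2 * i) + f (2 * i + 1)) := by
  induction n with
  | zero => simp
  | succ n ih => rw [Nat.mul_succ, sum_range_succ, sum_range_succ, ih, sum_range_succ, add_assoc]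

lemma Nnum_zero : Nnum 1 0 = 1 := by
  simp [Nnum, BSet_zero]

lemma Mnum_zero : Mnum 0 = 2 := by
  simp [Mnum, CSet, BSet_zero]

lemma Nnum_succ (m : ℕ) : Nnum 1 (m + 1) = 2 * Nnum 1 m + Mnum m := by
  simp only [Nnum, Mnum, pow_succ', sum_range_two_mul, BSet_two_mul, BSet_two_mul_add_one,
    card_image_two_mul_union, card_image_two_mul]
  rw [mul_sum, ← sum_add_distrib]
  exact sum_congr rfl fun s _ => by ring

lemma Mnum_succ (m : ℕ) : Mnum (m + 1) = 2 * Nnum 1 m + 2 * Mnum m := by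
  simp only [Nnum, Mnum, pow_succ', sum_range_two_mul, CSet_two_mul, CSet_two_mul_add_one,
    card_image_two_mul_union, mul_sum, ← sum_add_distrib]
  exact sum_congr rfl fun s _ => by ring

lemma Mnum_eq_sum (m : ℕ) : Mnum m = 1 + ∑ i ∈ range (m + 1), Nnum 1 i := by
  induction m with
  | zero => simp [Mnum_zero, Nnum_zero]
  | succ m ih =>
    rw [Mnum_succ, sum_range_succ, Nnum_succ, ← add_assoc, ← ih]
    ring

lemma Nnum_succ_eq_sum (m : ℕ) :
    Nnum 1 (m + 1) = 2 * Nnum 1 m + 1 + ∑ i ∈ range (m + 1), Nnum 1 i := by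
  rw [Nnum_succ, Mnum_eq_sum, add_assoc]

def mersenneConv (f : ℕ → ℕ) (m : ℕ) : ℕ := ∑ p ∈ antidiagonal m, mersenne p.1 * f p.2

lemma sum_antidiagonal_snd {M : Type*} [AddCommMonoid M] (f : ℕ → M) (m : ℕ) :
    ∑ p ∈ antidiagonal m, f p.2 = ∑ i ∈ range (m + 1), f i := by
  rw [← Nat.sum_antidiagonal_swap]
  exact Nat.sum_antidiagonal_eq_sum_range_succ (fun i _ => f i) m

lemma mersenneConv_succ (f : ℕ → ℕ) (m : ℕ) :
    mersenneConv f (m + 1) = 2 * mersenneConv f m + ∑ i ∈ range (m + 1), f i := by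
  simp only [mersenneConv, Nat.sum_antidiagonal_succ, mersenne_zero, zero_mul, zero_add,
    mersenne_succ, add_mul, one_mul, sum_add_distrib, mul_assoc, mul_sum, sum_antidiagonal_snd]

lemma mersenneConv_eq_sum_Icc (f : ℕ → ℕ) (m : ℕ) :
    mersenneConv f m = ∑ j ∈ Icc 1 m, mersenne j * f (m - j) := by
  rw [mersenneConv, Nat.sum_antidiagonal_eq_sum_range_succ (fun i j => mersenne i * f j),
    range_eq_Ico, sum_eq_sum_Ico_succ_bot m.succ_pos, mersenne_zero, zero_mul, zero_add, zero_add,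
    Nat.succ_eq_add_one, Ico_add_one_right_eq_Icc]

lemma Nnum_eq_mersenneConv (m : ℕ) : Nnum 1 m = mersenneConv (Nnum 1) m + mersenne (m + 1) := by
  induction m with
  | zero => simp [mersenneConv, Nnum_zero, mersenne]
  | succ m ih =>
    rw [Nnum_succ_eq_sum, ih, mersenneConv_succ, mersenne_succ (m + 1)]
    ring

theorem stmt_6_general (m : ℕ) :
    Nnum 1 m =
      (∑ j ∈ Finset.Icc 1 (m - 1), (2 ^ j - 1) * Nnum 1 (m - j)) +
        (2 ^ m - 1) + (2 ^ (m + 1) - 1) := by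
  rw [Nnum_eq_mersenneConv, mersenneConv_eq_sum_Icc]
  cases m with
  | zero => simp [mersenne]
  | succ k =>
    rw [Nat.add_sub_cancel, sum_Icc_succ_top (Nat.le_add_left 1 k), Nat.sub_self, Nnum_zero,
      mul_one]
    rfl

/-- For every `m ≥ 1`,
`N_m = Σ_{j=1}^{m−1} (2^j − 1)·N_{m−j} + (2^m − 1) + (2^{m+1} − 1)`,
with the sum empty when `m = 1`. -/
theorem stmt_6 (m : ℕ) (hm : 1 ≤ m) :
    Nnum 1 m =
      (∑ j ∈ Finset.Icc 1 (m - 1), (2 ^ j - 1) * Nnum 1 (m - j)) +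
        (2 ^ m - 1) + (2 ^ (m + 1) - 1) :=
  stmt_6_general m
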